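/- arXiv:1606.09309 — 2 statements merged into one kernel-verified Lean document; each statement's English description precedes it below -/
import Mathlib

section
/- Let {q_n} be the Fibonacci Quilt sequence. For all n ≥ 5, q_{n+1} = q_{n−1} + q_{n−2}. -/
open scoped BigOperators

/-- A finite set of indices is FQ-legal: distinct indices never differ by 1, 3 or 4,
and the set does not contain both 1 and 3. -/
def FQLegal (L : Finset ℕ) : Prop :=
  (∀ i ∈ L, ∀ j ∈ L, i ≠ j →
    max i j - min i j ≠ 1 ∧ max i j - min i j ≠ 3 ∧ max i j - min i j ≠ 4) ∧
  ¬ (1 ∈ L ∧ 3 ∈ L)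

/-- `m` has an FQ-legal decomposition using only `q_1, …, q_{i-1}`. -/
def FQRepr (q : ℕ → ℕ) (i m : ℕ) : Prop :=
  ∃ L : Finset ℕ, (∀ j ∈ L, 1 ≤ j ∧ j < i) ∧ FQLegal L ∧ (∑ j ∈ L, q j) = m

/-- `q` (1-indexed) is the Fibonacci Quilt sequence: `q 1 = 1` and for `i ≥ 2`,
`q i` is the smallest positive integer having no FQ-legal decomposition using
`{q_1, …, q_{i-1}}`. -/
def IsFQSeq (q : ℕ → ℕ) : Prop :=
  q 1 = 1 ∧ ∀ i, 2 ≤ i → IsLeast {m : ℕ | 0 < m ∧ ¬ FQRepr q i m} (q i)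

/-!
Let `f` be given by `f (n + 5) = f (n + 3) + f (n + 2)` with initial values `0, 1, 2, 3, 4`.
A legal sum whose largest index is `k` is below `f (k + 3)`, because removing the top index
leaves indices at most `k - 2`. By induction on `i`, `f i` has no legal decomposition with
indices below `i`: if the decomposition uses `i - 1`, the rest is `f (i - 5)` (as
`f i = f (i - 1) + f (i - 5)`) with indices below `i - 5`; if it uses `i - 2` but not `i - 1`,
the rest is `f (i - 3)` with indices below `i - 3`; otherwise the sum is too small (small `i`
are checked by enumeration). Conversely, taking greedily the largest part `f (i - 1) ≤ m`
leaves a remainder below `f (i - 5)`, whose parts are far enough from `i - 1`. So `f` has the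
defining property, which determines the sequence.
-/

open Finset

instance : DecidablePred FQLegal := fun L => by unfold FQLegal; infer_instance

theorem FQLegal.mono {L L' : Finset ℕ} (h : FQLegal L) (hs : L' ⊆ L) : FQLegal L' :=
  ⟨fun i hi j hj hij => h.1 i (hs hi) j (hs hj) hij, fun hc => h.2 ⟨hs hc.1, hs hc.2⟩⟩

theorem FQLegal.add_notMem {L : Finset ℕ} {i d : ℕ} (h : FQLegal L) (hi : i ∈ L)
    (hd : d = 1 ∨ d = 3 ∨ d = 4) : i + d ∉ L := fun hid => by
  have := h.1 i hi (i + d) hid (by omega)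
  omega

theorem FQLegal.insert {L : Finset ℕ} {k : ℕ} (h : FQLegal L) (hk : ∀ j ∈ L, j + 5 ≤ k) :
    FQLegal (insert k L) := by
  refine ⟨fun i hi j hj hij => ?_, fun ⟨h1, h3⟩ => ?_⟩
  · rcases mem_insert.1 hi with rfl | hi' <;> rcases mem_insert.1 hj with rfl | hj'
    · exact absurd rfl hij
    · have := hk j hj'; omega
    · have := hk i hi'; omega
    · exact h.1 i hi' j hj' hij
  · rcases mem_insert.1 h1 with rfl | h1 <;> rcases mem_insert.1 h3 with h3 | h3
    · omega
    · have := hk 3 h3; omega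
    · have := hk 1 h1; omega
    · exact h.2 ⟨h1, h3⟩

section FQRepr

variable {q : ℕ → ℕ} {i m : ℕ}

theorem fqRepr_zero : FQRepr q i 0 :=
  ⟨∅, by simp, ⟨by simp, by simp⟩, by simp⟩

theorem fqRepr_apply {j : ℕ} (hj : 1 ≤ j) (hji : j < i) : FQRepr q i (q j) :=
  ⟨{j}, by simp [hj, hji], ⟨by simp, by simp; omega⟩, by simp⟩

theorem FQRepr.mono {i' : ℕ} (h : FQRepr q i m) (hii' : i ≤ i') : FQRepr q i' m := by
  obtain ⟨L, hLi, hL, hsum⟩ := h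
  exact ⟨L, fun j hj => ⟨(hLi j hj).1, (hLi j hj).2.trans_le hii'⟩, hL, hsum⟩

theorem FQRepr.add_apply_add_four (h : FQRepr q i m) : FQRepr q (i + 5) (q (i + 4) + m) := by
  obtain ⟨L, hLi, hL, hsum⟩ := h
  have hfar : ∀ j ∈ L, j + 5 ≤ i + 4 := fun j hj => by have := hLi j hj; omega
  refine ⟨insert (i + 4) L, fun j hj => ?_, hL.insert hfar, ?_⟩
  · rcases mem_insert.1 hj with rfl | hj
    · omega
    · have := hLi j hj; omega
  · rw [sum_insert fun hi => by have := hfar _ hi; omega, hsum]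

theorem fqRepr_congr {q' : ℕ → ℕ} (h : ∀ j, 1 ≤ j → j < i → q j = q' j) :
    FQRepr q i m ↔ FQRepr q' i m :=
  exists_congr fun _ => and_congr_right fun hLi => and_congr_right fun _ => by
    rw [sum_congr rfl fun j hj => h j (hLi j hj).1 (hLi j hj).2]

end FQRepr

theorem IsFQSeq.unique {q q' : ℕ → ℕ} (hq : IsFQSeq q) (hq' : IsFQSeq q') :
    ∀ i, 1 ≤ i → q i = q' i := by
  intro i
  induction i using Nat.strong_induction_on with
  | _ i ih =>
    intro hi
    rcases hi.eq_or_lt with rfl | hi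
    · rw [hq.1, hq'.1]
    have hset : {m | 0 < m ∧ ¬ FQRepr q i m} = {m | 0 < m ∧ ¬ FQRepr q' i m} := by
      simp only [fqRepr_congr fun j hj hji => ih j hji hj]
    exact (hq.2 i hi).unique (hset ▸ hq'.2 i hi)

def fibQuilt : ℕ → ℕ
  | 0 => 0
  | 1 => 1
  | 2 => 2
  | 3 => 3
  | 4 => 4
  | n + 5 => fibQuilt (n + 3) + fibQuilt (n + 2)

theorem fibQuilt_add_five (n : ℕ) : fibQuilt (n + 5) = fibQuilt (n + 3) + fibQuilt (n + 2) :=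
  rfl

theorem fibQuilt_add_seven (n : ℕ) : fibQuilt (n + 7) = fibQuilt (n + 6) + fibQuilt (n + 2) := by
  have h7 : fibQuilt (n + 7) = fibQuilt (n + 5) + fibQuilt (n + 4) := rfl
  have h6 : fibQuilt (n + 6) = fibQuilt (n + 4) + fibQuilt (n + 3) := rfl
  have h5 : fibQuilt (n + 5) = fibQuilt (n + 3) + fibQuilt (n + 2) := rfl
  omega

theorem fibQuilt_lt_succ : ∀ n, fibQuilt n < fibQuilt (n + 1)
  | 0 | 1 | 2 | 3 | 4 => by decide
  | n + 5 => by
    show fibQuilt (n + 5) < fibQuilt (n + 6)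
    have h6 : fibQuilt (n + 6) = fibQuilt (n + 4) + fibQuilt (n + 3) := rfl
    have h5 : fibQuilt (n + 5) = fibQuilt (n + 3) + fibQuilt (n + 2) := rfl
    have h43 : fibQuilt (n + 3) < fibQuilt (n + 4) := fibQuilt_lt_succ (n + 3)
    have h32 : fibQuilt (n + 2) < fibQuilt (n + 3) := fibQuilt_lt_succ (n + 2)
    omega

theorem fibQuilt_strictMono : StrictMono fibQuilt :=
  strictMono_nat_of_lt_succ fibQuilt_lt_succ

theorem fibQuilt_pos {n : ℕ} (hn : 0 < n) : 0 < fibQuilt n :=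
  fibQuilt_strictMono hn

theorem fibQuilt_add_succ_le (k : ℕ) : fibQuilt k + fibQuilt (k + 1) ≤ fibQuilt (k + 3) := by
  rcases k with _ | _ | k
  · decide
  · decide
  · exact (fibQuilt_add_five k).ge.trans_eq' (Nat.add_comm _ _)

theorem sum_fibQuilt_lt {L : Finset ℕ} (hL : FQLegal L) {k : ℕ} (hLk : ∀ j ∈ L, j ≤ k) :
    ∑ j ∈ L, fibQuilt j < fibQuilt (k + 3) := by
  induction k using Nat.strong_induction_on generalizing L with
  | _ k ih =>
    by_cases hkL : k ∈ L
    · have hgap : ∀ j ∈ L.erase k, j + 2 ≤ k := fun j hj => by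
        have := hLk j (mem_of_mem_erase hj)
        have := ne_of_mem_erase hj
        have : j + 1 ≠ k := fun h => hL.add_notMem (mem_of_mem_erase hj) (d := 1) (by omega)
          (h ▸ hkL)
        omega
      have hrest : ∑ j ∈ L.erase k, fibQuilt j < fibQuilt (k + 1) := by
        rcases Nat.lt_or_ge k 2 with hk | hk
        · rw [sum_eq_zero fun j hj => absurd (hgap j hj) (by omega)]
          exact fibQuilt_pos k.succ_pos
        · obtain ⟨n, rfl⟩ := Nat.exists_eq_add_of_le' hk
          exact ih n (by omega) (hL.mono (erase_subset _ _))
            fun j hj => by have := hgap j hj; omega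
      calc ∑ j ∈ L, fibQuilt j = fibQuilt k + ∑ j ∈ L.erase k, fibQuilt j :=
            (add_sum_erase L _ hkL).symm
        _ < fibQuilt k + fibQuilt (k + 1) := by omega
        _ ≤ fibQuilt (k + 3) := fibQuilt_add_succ_le k
    · rcases k with _ | k
      · have hL0 : L = ∅ := eq_empty_of_forall_notMem fun j hj => hkL <| by
          obtain rfl : j = 0 := Nat.le_zero.1 (hLk j hj)
          exact hj
        rw [hL0]
        exact fibQuilt_pos (by omega)
      · calc ∑ j ∈ L, fibQuilt j < fibQuilt (k + 3) :=
              ih k k.lt_succ_self hL fun j hj => by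
                have := hLk j hj; have : j ≠ k + 1 := fun h => hkL (h ▸ hj); omega
          _ < fibQuilt (k + 1 + 3) := fibQuilt_lt_succ _

theorem fqRepr_fibQuilt_of_lt {i m : ℕ} (hm : m < fibQuilt i) : FQRepr fibQuilt i m := by
  induction i using Nat.strong_induction_on generalizing m with
  | _ i ih =>
    rcases i with _ | i
    · exact absurd hm (Nat.not_lt_zero m)
    rcases lt_or_ge m (fibQuilt i) with hlt | hge
    · exact (ih i i.lt_succ_self hlt).mono i.le_succ
    by_cases hi : 6 ≤ i
    · obtain ⟨t, rfl⟩ := Nat.exists_eq_add_of_le' hi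
      have hrec : fibQuilt (t + 6 + 1) = fibQuilt (t + 6) + fibQuilt (t + 2) :=
        fibQuilt_add_seven t
      obtain ⟨r, rfl⟩ := Nat.exists_eq_add_of_le hge
      exact (ih (t + 2) (by omega) (by omega : r < fibQuilt (t + 2))).add_apply_add_four
    · have hsmall : m = fibQuilt i ∨ (i = 5 ∧ m = 6) := by
        interval_cases i <;> simp [fibQuilt] at hge hm ⊢ <;> omega
      rcases hsmall with rfl | ⟨rfl, rfl⟩
      · rcases i.eq_zero_or_pos with rfl | hi0
        · exact fqRepr_zero
        · exact fqRepr_apply hi0 i.lt_succ_self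
      · exact ⟨{2, 4}, by decide, by decide, rfl⟩

theorem not_fqRepr_fibQuilt_self_of_le_six {i : ℕ} (hi : 2 ≤ i) (hi6 : i ≤ 6) :
    ¬ FQRepr fibQuilt i (fibQuilt i) := by
  rintro ⟨L, hLi, hL, hsum⟩
  have hcases : ∀ i ∈ Icc 2 6, ∀ L ∈ (Icc 1 (i - 1)).powerset, FQLegal L →
      ∑ j ∈ L, fibQuilt j ≠ fibQuilt i := by
    decide
  refine hcases i (mem_Icc.2 ⟨hi, hi6⟩) L (mem_powerset.2 fun j hj => ?_) hL hsum
  have := hLi j hj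
  exact mem_Icc.2 ⟨this.1, by omega⟩

theorem not_fqRepr_fibQuilt_self {i : ℕ} (hi : 2 ≤ i) : ¬ FQRepr fibQuilt i (fibQuilt i) := by
  induction i using Nat.strong_induction_on with
  | _ i ih =>
  by_cases hi6 : i ≤ 6
  · exact not_fqRepr_fibQuilt_self_of_le_six hi hi6
  obtain ⟨t, rfl⟩ : ∃ t, i = t + 7 := ⟨i - 7, by omega⟩
  rintro ⟨L, hLi, hL, hsum⟩
  by_cases h6 : t + 6 ∈ L
  · have hrest : ∑ j ∈ L.erase (t + 6), fibQuilt j = fibQuilt (t + 2) := by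
      have := add_sum_erase L fibQuilt h6
      have := fibQuilt_add_seven t
      omega
    refine ih (t + 2) (by omega) (by omega)
      ⟨L.erase (t + 6), fun j hj => ?_, hL.mono (erase_subset _ _), hrest⟩
    have hjL := mem_of_mem_erase hj
    have hle : j ≤ t + 2 := fibQuilt_strictMono.le_iff_le.1
      (hrest ▸ single_le_sum (fun _ _ => Nat.zero_le _) hj)
    have hne : j + 4 ≠ t + 6 := fun h => hL.add_notMem hjL (d := 4) (by omega) (h ▸ h6)
    exact ⟨(hLi j hjL).1, by omega⟩
  by_cases h5 : t + 5 ∈ L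
  · have hrest : ∑ j ∈ L.erase (t + 5), fibQuilt j = fibQuilt (t + 4) := by
      have := add_sum_erase L fibQuilt h5
      have : fibQuilt (t + 7) = fibQuilt (t + 5) + fibQuilt (t + 4) := fibQuilt_add_five (t + 2)
      omega
    refine ih (t + 4) (by omega) (by omega)
      ⟨L.erase (t + 5), fun j hj => ?_, hL.mono (erase_subset _ _), hrest⟩
    have hjL := mem_of_mem_erase hj
    have hne5 := ne_of_mem_erase hj
    have hne6 : j ≠ t + 6 := fun h => h6 (h ▸ hjL)
    have hne4 : j + 1 ≠ t + 5 := fun h => hL.add_notMem hjL (d := 1) (by omega) (h ▸ h5)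
    have := hLi j hjL
    exact ⟨this.1, by omega⟩
  refine (sum_fibQuilt_lt hL (k := t + 4) fun j hj => ?_).ne hsum
  have hne6 : j ≠ t + 6 := fun h => h6 (h ▸ hj)
  have hne5 : j ≠ t + 5 := fun h => h5 (h ▸ hj)
  have := (hLi j hj).2
  omega

theorem isFQSeq_fibQuilt : IsFQSeq fibQuilt :=
  ⟨rfl, fun i hi => ⟨⟨fibQuilt_pos (by omega), not_fqRepr_fibQuilt_self hi⟩,
    fun _ ⟨_, hm⟩ => not_lt.1 fun hlt => hm (fqRepr_fibQuilt_of_lt hlt)⟩⟩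

theorem stmt_3 (q : ℕ → ℕ) (hq : IsFQSeq q) :
    ∀ n : ℕ, 5 ≤ n → q (n + 1) = q (n - 1) + q (n - 2) := by
  intro n hn
  obtain ⟨t, rfl⟩ := Nat.exists_eq_add_of_le' hn
  have h := hq.unique isFQSeq_fibQuilt
  rw [h (t + 5 + 1) (by omega), h (t + 5 - 1) (by omega), h (t + 5 - 2) (by omega)]
  exact fibQuilt_add_five (t + 1)
end

section
/- Fix integers s, b ≥ 1 and let {a_n} be the (s,b)-Generacci sequence. For n, k ≥ 0 let q_{n,k} denote the number of integers m ∈ [0, a_{nb+1}) whose (s,b)-Generacci legal decomposition contains exactly k summands. Then q_{n,0} = 1 and q_{n,1} = nb for all n; q_{n,k} = 0 whenever n < s+1 and k ≥ 2; for n ≥ s+1 and 1 ≤ k ≤ (n+s)/(s+1), q_{n,k} = b·q_{n−(s+1),k−1} + q_{n−1,k}; and q_{n,k} = 0 whenever k > (n+s)/(s+1). -/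
open scoped BigOperators

/-- Bin index (1-indexed) of position `ℓ` when bins have size `b`: `⌈ℓ/b⌉`. -/
def binIdx (b ℓ : ℕ) : ℕ := (ℓ + b - 1) / b

/-- A finite set of indices is `(s,b)`-legal if the bin indices of any two distinct
elements differ by more than `s`. -/
def SBLegal (s b : ℕ) (L : Finset ℕ) : Prop :=
  ∀ i ∈ L, ∀ j ∈ L, i ≠ j →
    s < max (binIdx b i) (binIdx b j) - min (binIdx b i) (binIdx b j)

/-- `m` has an `(s,b)`-Generacci legal decomposition using only `a_1, …, a_{i-1}`. -/
def SBRepr (s b : ℕ) (a : ℕ → ℕ) (i m : ℕ) : Prop :=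
  ∃ L : Finset ℕ, (∀ j ∈ L, 1 ≤ j ∧ j < i) ∧ SBLegal s b L ∧ (∑ j ∈ L, a j) = m

/-- `a` (1-indexed) is the `(s,b)`-Generacci sequence: an increasing sequence of positive
integers in which each `a i` is the smallest positive integer having no `(s,b)`-Generacci
legal decomposition using elements of `{a_1, …, a_{i-1}}`. -/
def IsGeneracci (s b : ℕ) (a : ℕ → ℕ) : Prop :=
  (∀ i, 1 ≤ i → a i < a (i + 1)) ∧
  ∀ i, 1 ≤ i → IsLeast {m : ℕ | 0 < m ∧ ¬ SBRepr s b a i m} (a i)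


/-- `q_{n,k}` : the number of integers `m ∈ [0, a_{nb+1})` whose `(s,b)`-Generacci legal
decomposition contains exactly `k` summands (here `k : ℕ → ℕ` is the
number-of-summands function). -/
def sbQCount (a : ℕ → ℕ) (b : ℕ) (k : ℕ → ℕ) (n kk : ℕ) : ℕ :=
  ((Finset.range (a (n * b + 1))).filter (fun m => k m = kk)).card

/-!
Write `t ℓ = (⌈ℓ/b⌉ - (s+1)) b` for the largest index that can accompany `ℓ` in a legal
decomposition. The minimality defining the sequence gives the recurrence
`a (ℓ+1) = a ℓ + a (t ℓ + 1)`: every number below the right-hand side is `a ℓ` plus a number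
representable with indices at most `t ℓ`, while no legal decomposition with indices at most `ℓ`
reaches it. Hence the integers in `[a ℓ, a (ℓ+1))` are the `a ℓ + m` with `m < a (t ℓ + 1)`, and
they have exactly one summand more than `m`. Summing over the `b` positions of bin `n + 1`, on
which `t ℓ = (n - s) b`, gives `q (n+1) (k+1) = q n (k+1) + b q (n-s) k`; the remaining claims
follow from it by induction on `n`.
-/

section Bins

variable {s b : ℕ}

lemma binIdx_le_iff (hb : 0 < b) {ℓ t : ℕ} : binIdx b ℓ ≤ t ↔ ℓ ≤ t * b := by
  rw [binIdx, Nat.div_le_iff_le_mul_add_pred hb, Nat.mul_comm]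
  omega

lemma binIdx_pos (hb : 0 < b) {ℓ : ℕ} (hℓ : 1 ≤ ℓ) : 0 < binIdx b ℓ := by
  by_contra h
  have := (binIdx_le_iff hb (ℓ := ℓ) (t := 0)).1 (by omega)
  omega

lemma binIdx_mul_add_succ (hb : 0 < b) {n r : ℕ} (hr : r < b) :
    binIdx b (n * b + r + 1) = n + 1 := by
  have hle : binIdx b (n * b + r + 1) ≤ n + 1 := (binIdx_le_iff hb).2 (by rw [add_one_mul]; omega)
  have hgt : ¬ binIdx b (n * b + r + 1) ≤ n := by rw [binIdx_le_iff hb]; omega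
  omega

/-- The last index of the bin `s + 1` places below the bin of `ℓ`; it is `0` (truncated
subtraction) when there is no such bin. -/
def maxCompatible (s b ℓ : ℕ) : ℕ := (binIdx b ℓ - (s + 1)) * b

lemma binIdx_add_lt_iff (hb : 0 < b) {i ℓ : ℕ} (hi : 1 ≤ i) :
    binIdx b i + s < binIdx b ℓ ↔ i ≤ maxCompatible s b ℓ := by
  rw [maxCompatible, ← binIdx_le_iff hb]
  have := binIdx_pos hb hi
  omega

lemma maxCompatible_lt (hb : 0 < b) {ℓ : ℕ} (hℓ : 1 ≤ ℓ) : maxCompatible s b ℓ < ℓ := by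
  rw [maxCompatible, ← not_le, ← binIdx_le_iff hb]
  have := binIdx_pos hb hℓ
  omega

lemma maxCompatible_mul_add_succ (hb : 0 < b) {n r : ℕ} (hr : r < b) :
    maxCompatible s b (n * b + r + 1) = (n - s) * b := by
  rw [maxCompatible, binIdx_mul_add_succ hb hr, Nat.add_sub_add_right]

end Bins

namespace SBLegal

variable {s b : ℕ} {L : Finset ℕ}

lemma subset {L' : Finset ℕ} (hL : SBLegal s b L) (h : L' ⊆ L) : SBLegal s b L' :=
  fun i hi j hj hij => hL i (h hi) j (h hj) hij

lemma le_maxCompatible (hb : 0 < b) (hL : SBLegal s b L) {i j : ℕ} (hi : i ∈ L) (hj : j ∈ L)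
    (hi1 : 1 ≤ i) (hij : i < j) : i ≤ maxCompatible s b j := by
  rw [← binIdx_add_lt_iff hb hi1]
  have hgap := hL i hi j hj hij.ne
  have hmono : binIdx b i ≤ binIdx b j := Nat.div_le_div_right (by omega)
  omega

lemma insert_of_le_maxCompatible (hb : 0 < b) (hL : SBLegal s b L) {ℓ : ℕ}
    (h : ∀ i ∈ L, 1 ≤ i ∧ i ≤ maxCompatible s b ℓ) : SBLegal s b (insert ℓ L) := by
  have hgap : ∀ i ∈ L, binIdx b i + s < binIdx b ℓ := fun i hi =>
    (binIdx_add_lt_iff hb (h i hi).1).2 (h i hi).2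
  intro i hi j hj hij
  rw [Finset.mem_insert] at hi hj
  rcases hi with rfl | hi <;> rcases hj with rfl | hj
  · exact absurd rfl hij
  · have := hgap j hj; omega
  · have := hgap i hi; omega
  · exact hL i hi j hj hij

end SBLegal

lemma notMem_of_le_maxCompatible {s b ℓ : ℕ} {L : Finset ℕ} (hb : 0 < b) (hℓ : 1 ≤ ℓ)
    (h : ∀ i ∈ L, i ≤ maxCompatible s b ℓ) : ℓ ∉ L := fun hmem =>
  (h ℓ hmem).not_gt (maxCompatible_lt hb hℓ)

namespace IsGeneracci

variable {s b : ℕ} {a : ℕ → ℕ} (ha : IsGeneracci s b a)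
include ha

lemma pos {i : ℕ} (hi : 1 ≤ i) : 0 < a i := (ha.2 i hi).1.1

lemma apply_one : a 1 = 1 := by
  refine le_antisymm ((ha.2 1 le_rfl).2 ⟨one_pos, ?_⟩) (ha.pos le_rfl)
  rintro ⟨L, hL, -, hsum⟩
  rw [Finset.eq_empty_of_forall_notMem (s := L) fun j hj => by have := hL j hj; omega] at hsum
  simp at hsum

lemma strictMonoOn : StrictMonoOn a (Set.Ici 1) :=
  strictMonoOn_of_lt_add_one Set.ordConnected_Ici fun i _ hi _ => ha.1 i hi

lemma lt_of_apply_lt {i j : ℕ} (hi : 1 ≤ i) (hj : 1 ≤ j) (h : a i < a j) : i < j :=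
  (ha.strictMonoOn.lt_iff_lt hi hj).1 h

lemma le_apply {i : ℕ} (hi : 1 ≤ i) : i ≤ a i := by
  induction i, hi using Nat.le_induction with
  | base => exact ha.pos le_rfl
  | succ i hi ih => exact ih.trans_lt (ha.1 i hi)

lemma sbRepr_of_lt {i m : ℕ} (hi : 1 ≤ i) (hm : m < a i) : SBRepr s b a i m := by
  rcases Nat.eq_zero_or_pos m with rfl | hm0
  · exact ⟨∅, by simp, fun i hi => by simp at hi, by simp⟩
  · by_contra hrep
    exact hm.not_ge ((ha.2 i hi).2 ⟨hm0, hrep⟩)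

lemma exists_legal (m : ℕ) :
    ∃ L : Finset ℕ, (∀ j ∈ L, 1 ≤ j) ∧ SBLegal s b L ∧ ∑ j ∈ L, a j = m := by
  obtain ⟨L, hL, hleg, hsum⟩ := ha.sbRepr_of_lt (i := m + 1) (by omega) (ha.le_apply (by omega))
  exact ⟨L, fun j hj => (hL j hj).1, hleg, hsum⟩

lemma sbRepr_of_lt_add (hb : 0 < b) {ℓ m : ℕ} (hℓ : 1 ≤ ℓ)
    (hm : m < a ℓ + a (maxCompatible s b ℓ + 1)) : SBRepr s b a (ℓ + 1) m := by
  rcases lt_or_ge m (a ℓ) with hlt | hge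
  · obtain ⟨L, hL, hleg, hsum⟩ := ha.sbRepr_of_lt hℓ hlt
    exact ⟨L, fun j hj => ⟨(hL j hj).1, by have := (hL j hj).2; omega⟩, hleg, hsum⟩
  · obtain ⟨L, hL, hleg, hsum⟩ :=
      ha.sbRepr_of_lt (i := maxCompatible s b ℓ + 1) (m := m - a ℓ) (by omega) (by omega)
    have hL' : ∀ i ∈ L, 1 ≤ i ∧ i ≤ maxCompatible s b ℓ := fun i hi =>
      ⟨(hL i hi).1, Nat.lt_succ_iff.1 (hL i hi).2⟩
    have hnot := notMem_of_le_maxCompatible hb hℓ fun i hi => (hL' i hi).2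
    refine ⟨insert ℓ L, fun j hj => ?_, hleg.insert_of_le_maxCompatible hb hL', ?_⟩
    · rcases Finset.mem_insert.1 hj with rfl | hj
      · omega
      · have := hL' j hj; have := maxCompatible_lt (s := s) hb hℓ; omega
    · rw [Finset.sum_insert hnot, hsum]
      omega

lemma add_le_apply_succ (hb : 0 < b) {ℓ : ℕ} (hℓ : 1 ≤ ℓ) :
    a ℓ + a (maxCompatible s b ℓ + 1) ≤ a (ℓ + 1) := by
  by_contra! h
  exact (ha.2 (ℓ + 1) (by omega)).1.2 (ha.sbRepr_of_lt_add hb hℓ h)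

/-- The elements of a legal decomposition below its largest index `j` are at most
`maxCompatible s b j`, so by induction they sum to less than `a (maxCompatible s b j + 1)`,
and then `add_le_apply_succ` bounds the whole sum by `a (j + 1)`. -/
lemma sum_lt (hb : 0 < b) {L : Finset ℕ} (hL : SBLegal s b L) (h1 : ∀ j ∈ L, 1 ≤ j) {ℓ : ℕ}
    (hℓ : ∀ j ∈ L, j ≤ ℓ) : ∑ j ∈ L, a j < a (ℓ + 1) := by
  induction L using Finset.induction_on_max generalizing ℓ with
  | empty => simpa using ha.pos (i := ℓ + 1) (by omega)
  | insert j S hS ih =>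
    have hj1 := h1 j (Finset.mem_insert_self j S)
    have hjS : j ∉ S := fun h => (hS j h).false
    have hrest : ∑ i ∈ S, a i < a (maxCompatible s b j + 1) :=
      ih (hL.subset (Finset.subset_insert j S)) (fun i hi => h1 i (Finset.mem_insert_of_mem hi))
        fun i hi => hL.le_maxCompatible hb (Finset.mem_insert_of_mem hi)
          (Finset.mem_insert_self j S) (h1 i (Finset.mem_insert_of_mem hi)) (hS i hi)
    calc ∑ i ∈ insert j S, a i = a j + ∑ i ∈ S, a i := Finset.sum_insert hjS
      _ < a j + a (maxCompatible s b j + 1) := by omega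
      _ ≤ a (j + 1) := ha.add_le_apply_succ hb hj1
      _ ≤ a (ℓ + 1) :=
        ha.strictMonoOn.monotoneOn (by simp) (by simp) (by simpa using hℓ j (by simp))

lemma not_sbRepr_add (hb : 0 < b) {ℓ : ℕ} (hℓ : 1 ≤ ℓ) :
    ¬ SBRepr s b a (ℓ + 1) (a ℓ + a (maxCompatible s b ℓ + 1)) := by
  rintro ⟨L, hL, hleg, hsum⟩
  by_cases hmem : ℓ ∈ L
  · have hrest : ∑ i ∈ L.erase ℓ, a i < a (maxCompatible s b ℓ + 1) := by
      refine ha.sum_lt hb (hleg.subset (Finset.erase_subset ℓ L))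
        (fun i hi => (hL i (Finset.mem_of_mem_erase hi)).1) fun i hi => ?_
      have hiL := Finset.mem_of_mem_erase hi
      exact hleg.le_maxCompatible hb hiL hmem (hL i hiL).1
        (lt_of_le_of_ne (Nat.lt_succ_iff.1 (hL i hiL).2) (Finset.ne_of_mem_erase hi))
    rw [← Finset.add_sum_erase L a hmem] at hsum
    omega
  · have := ha.sum_lt (ℓ := ℓ - 1) hb hleg (fun i hi => (hL i hi).1) fun i hi => by
      have := (hL i hi).2; have : i ≠ ℓ := fun h => hmem (h ▸ hi); omega
    rw [Nat.sub_add_cancel hℓ] at this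
    omega

lemma apply_succ (hb : 0 < b) {ℓ : ℕ} (hℓ : 1 ≤ ℓ) :
    a (ℓ + 1) = a ℓ + a (maxCompatible s b ℓ + 1) :=
  le_antisymm ((ha.2 (ℓ + 1) (by omega)).2 ⟨by have := ha.pos hℓ; omega, ha.not_sbRepr_add hb hℓ⟩)
    (ha.add_le_apply_succ hb hℓ)

end IsGeneracci

def countBelow (k : ℕ → ℕ) (N j : ℕ) : ℕ := ((Finset.range N).filter (fun m => k m = j)).card

lemma countBelow_add {k : ℕ → ℕ} {N D : ℕ} (h : ∀ m < D, k (N + m) = k m + 1) (j : ℕ) :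
    countBelow k (N + D) (j + 1) = countBelow k N (j + 1) + countBelow k D j := by
  simp only [countBelow, Finset.card_filter, Finset.sum_range_add]
  congr 1
  refine Finset.sum_congr rfl fun m hm => ?_
  simp only [h m (Finset.mem_range.1 hm), Nat.add_right_cancel_iff]

lemma apply_add_eq_add_mul {f : ℕ → ℕ} {m c : ℕ} :
    ∀ n, (∀ r < n, f (m + r + 1) = f (m + r) + c) → f (m + n) = f m + n * c
  | 0, _ => by simp
  | n + 1, h => by
    rw [← add_assoc, h n n.lt_succ_self,
      apply_add_eq_add_mul n fun r hr => h r (Nat.lt_succ_of_lt hr)]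
    ring

section SummandCount

variable {s b : ℕ} {a k : ℕ → ℕ} (ha : IsGeneracci s b a)
  (hk : ∀ m : ℕ, ∀ L : Finset ℕ, (∀ j ∈ L, 1 ≤ j) → SBLegal s b L →
    (∑ j ∈ L, a j) = m → L.card = k m)
include ha hk

lemma summandCount_eq_zero_iff {m : ℕ} : k m = 0 ↔ m = 0 := by
  constructor
  · intro hm
    obtain ⟨L, h1, hleg, hsum⟩ := ha.exists_legal m
    rw [Finset.card_eq_zero.1 ((hk m L h1 hleg hsum).trans hm)] at hsum
    simpa using hsum.symm
  · rintro rfl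
    exact (hk 0 ∅ (by simp) (fun i hi => by simp at hi) (by simp)).symm

lemma summandCount_add (hb : 0 < b) {ℓ m : ℕ} (hℓ : 1 ≤ ℓ)
    (hm : m < a (maxCompatible s b ℓ + 1)) : k (a ℓ + m) = k m + 1 := by
  obtain ⟨L, h1, hleg, hsum⟩ := ha.exists_legal m
  have hL : ∀ i ∈ L, 1 ≤ i ∧ i ≤ maxCompatible s b ℓ := fun i hi => by
    refine ⟨h1 i hi, Nat.lt_succ_iff.1 (ha.lt_of_apply_lt (h1 i hi) (by omega) ?_)⟩
    exact lt_of_le_of_lt (hsum ▸ Finset.single_le_sum (fun _ _ => Nat.zero_le _) hi) hm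
  have hnot := notMem_of_le_maxCompatible hb hℓ fun i hi => (hL i hi).2
  have hins := hk (a ℓ + m) (insert ℓ L)
    (fun i hi => (Finset.mem_insert.1 hi).elim (· ▸ hℓ) (h1 i))
    (hleg.insert_of_le_maxCompatible hb hL) (by rw [Finset.sum_insert hnot, hsum])
  rw [← hins, Finset.card_insert_of_notMem hnot, hk m L h1 hleg hsum]

lemma countBelow_apply_succ (hb : 0 < b) {ℓ : ℕ} (hℓ : 1 ≤ ℓ) (j : ℕ) :
    countBelow k (a (ℓ + 1)) (j + 1) =
      countBelow k (a ℓ) (j + 1) + countBelow k (a (maxCompatible s b ℓ + 1)) j := by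
  rw [ha.apply_succ hb hℓ]
  exact countBelow_add (fun m hm => summandCount_add ha hk hb hℓ hm) j

lemma sbQCount_succ (hb : 0 < b) (n j : ℕ) :
    sbQCount a b k (n + 1) (j + 1) = sbQCount a b k n (j + 1) + b * sbQCount a b k (n - s) j := by
  have := apply_add_eq_add_mul (f := fun x => countBelow k (a (x + 1)) (j + 1)) (m := n * b)
    (c := sbQCount a b k (n - s) j) b fun r hr => by
      rw [countBelow_apply_succ ha hk hb (by omega), maxCompatible_mul_add_succ hb hr]
      rfl
  rwa [← add_one_mul] at this

lemma sbQCount_zero_right (n : ℕ) : sbQCount a b k n 0 = 1 := by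
  simp only [sbQCount, summandCount_eq_zero_iff ha hk, Finset.filter_eq', Finset.mem_range,
    ha.pos (i := n * b + 1) (by omega), if_true, Finset.card_singleton]

lemma sbQCount_zero_left (j : ℕ) : sbQCount a b k 0 (j + 1) = 0 := by
  simp only [sbQCount, zero_mul, zero_add, ha.apply_one, Finset.range_one,
    Finset.card_eq_zero, Finset.filter_eq_empty_iff, Finset.mem_singleton, forall_eq,
    (summandCount_eq_zero_iff ha hk).2 rfl]
  omega

lemma sbQCount_one (hb : 0 < b) (n : ℕ) : sbQCount a b k n 1 = n * b := by
  induction n with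
  | zero => simpa using sbQCount_zero_left ha hk 0
  | succ n ih => rw [sbQCount_succ ha hk hb, ih, sbQCount_zero_right ha hk]; ring

lemma sbQCount_eq_zero (hb : 0 < b) (n kk : ℕ) (h : n + s < kk * (s + 1)) :
    sbQCount a b k n kk = 0 := by
  induction n using Nat.strong_induction_on generalizing kk with
  | _ n ih =>
    rcases kk with _ | j
    · simp at h
    rcases n with _ | n
    · exact sbQCount_zero_left ha hk j
    rcases j with _ | j
    · omega
    have hj : s + 1 ≤ (j + 1) * (s + 1) := Nat.le_mul_of_pos_left _ j.succ_pos
    rw [add_one_mul] at h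
    rw [sbQCount_succ ha hk hb, ih n (by omega) _ (by rw [add_one_mul]; omega),
      ih (n - s) (by omega) _ (by omega)]
    simp

end SummandCount

theorem stmt_17_general (s b : ℕ) (hb : 1 ≤ b) (a : ℕ → ℕ)
    (ha : IsGeneracci s b a) (k : ℕ → ℕ)
    (hk : ∀ m : ℕ, ∀ L : Finset ℕ, (∀ j ∈ L, 1 ≤ j) → SBLegal s b L →
      (∑ j ∈ L, a j) = m → L.card = k m) :
    (∀ n : ℕ, sbQCount a b k n 0 = 1) ∧
    (∀ n : ℕ, sbQCount a b k n 1 = n * b) ∧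
    (∀ n kk : ℕ, n < s + 1 → 2 ≤ kk → sbQCount a b k n kk = 0) ∧
    (∀ n kk : ℕ, s + 1 ≤ n → 1 ≤ kk → kk * (s + 1) ≤ n + s →
      sbQCount a b k n kk =
        b * sbQCount a b k (n - (s + 1)) (kk - 1) + sbQCount a b k (n - 1) kk) ∧
    (∀ n kk : ℕ, n + s < kk * (s + 1) → sbQCount a b k n kk = 0) := by
  refine ⟨sbQCount_zero_right ha hk, sbQCount_one ha hk hb, fun n kk hn hkk => ?_,
    fun n kk hn hkk _ => ?_, sbQCount_eq_zero ha hk hb⟩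
  · exact sbQCount_eq_zero ha hk hb n kk (by nlinarith)
  · obtain ⟨n, rfl⟩ : ∃ n', n = n' + 1 := ⟨n - 1, by omega⟩
    obtain ⟨j, rfl⟩ : ∃ j, kk = j + 1 := ⟨kk - 1, by omega⟩
    rw [sbQCount_succ ha hk hb, Nat.add_sub_add_right, Nat.add_sub_cancel, Nat.add_sub_cancel,
      add_comm]

theorem stmt_17 (s b : ℕ) (hs : 1 ≤ s) (hb : 1 ≤ b) (a : ℕ → ℕ)
    (ha : IsGeneracci s b a) (k : ℕ → ℕ)
    (hk : ∀ m : ℕ, ∀ L : Finset ℕ, (∀ j ∈ L, 1 ≤ j) → SBLegal s b L →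
      (∑ j ∈ L, a j) = m → L.card = k m)
    (hex : ∀ m : ℕ, ∃ L : Finset ℕ,
      (∀ j ∈ L, 1 ≤ j) ∧ SBLegal s b L ∧ (∑ j ∈ L, a j) = m) :
    (∀ n : ℕ, sbQCount a b k n 0 = 1) ∧
    (∀ n : ℕ, sbQCount a b k n 1 = n * b) ∧
    (∀ n kk : ℕ, n < s + 1 → 2 ≤ kk → sbQCount a b k n kk = 0) ∧
    (∀ n kk : ℕ, s + 1 ≤ n → 1 ≤ kk → kk * (s + 1) ≤ n + s →
      sbQCount a b k n kk =
        b * sbQCount a b k (n - (s + 1)) (kk - 1) + sbQCount a b k (n - 1) kk) ∧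
    (∀ n kk : ℕ, n + s < kk * (s + 1) → sbQCount a b k n kk = 0) :=
  stmt_17_general s b hb a ha k hk
end
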